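/- Let Q ⊂ ℝ^d be a cube, p ∈ (1,∞), α ∈ [0,∞) and C₁ ∈ (0,1]. Suppose f is measurable on Q with (1/|Q|)∫_Q |f(y)| dy ≤ C₁ and ‖f‖_{L^p(log L)^{−α},Q} ≤ 1. Then for every q ∈ (1,p), for r ∈ (0,1) determined by 1/q = r + (1−r)/p, and for every ε ∈ (0,r), one has ((1/|Q|)∫_Q |f(y)|^q dy)^{1/q} ≤ C·C₁^ε, where C depends only on p, q, α and ε. -/

import Mathlib

open MeasureTheory Metric Set Filter
open scoped ENNReal NNReal Real Topology Pointwise FourierTransform RealInnerProductSpace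

noncomputable section

/-- Euclidean space `ℝ^d`. -/
abbrev Rd (d : ℕ) := EuclideanSpace ℝ (Fin d)

/-- Surface measure on the unit sphere `S^{d-1}`, realized as the `(d-1)`-dimensional
Hausdorff measure restricted to the sphere. -/
def sphereMeasure (d : ℕ) : Measure (Rd d) := (μH[(d : ℝ) - 1]).restrict (sphere (0 : Rd d) 1)

/-- `Φ(t) = t log(e + t)`. -/
def Phi (t : ℝ) : ℝ := t * Real.log (Real.exp 1 + t)

/-- `Q` is an (axis-parallel, closed) cube with side length `l`. -/
def IsCubeSide {d : ℕ} (Q : Set (Rd d)) (l : ℝ) : Prop :=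
  ∃ c : Rd d, Q = {x | ∀ i, x i ∈ Icc (c i) (c i + l)}

/-- `Q` is a (nondegenerate) cube. -/
def IsCube {d : ℕ} (Q : Set (Rd d)) : Prop := ∃ l : ℝ, 0 < l ∧ IsCubeSide Q l

/-- `Q` is a standard dyadic cube `2^k([0,1]^d + m)`. -/
def IsDyadicCube {d : ℕ} (Q : Set (Rd d)) : Prop :=
  ∃ (k : ℤ) (m : Fin d → ℤ),
    Q = {x | ∀ i, x i ∈ Icc ((2:ℝ)^k * m i) ((2:ℝ)^k * (m i + 1))}

/-- mean value `⟨b⟩_Q` of `b` on `Q`. -/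
def cavg {d : ℕ} (b : Rd d → ℝ) (Q : Set (Rd d)) : ℝ := ⨍ x in Q, b x

/-- `b` is in `BMO(ℝ^d)` with `‖b‖_{BMO} ≤ M`. -/
def BMOBound {d : ℕ} (b : Rd d → ℝ) (M : ℝ) : Prop :=
  MeasureTheory.LocallyIntegrable b volume ∧
    ∀ Q : Set (Rd d), IsCube Q → (⨍ x in Q, |b x - cavg b Q|) ≤ M

/-- `Ω` is homogeneous of degree zero. -/
def Homog0 {d : ℕ} (Ω : Rd d → ℝ) : Prop := ∀ r : ℝ, 0 < r → ∀ x : Rd d, Ω (r • x) = Ω x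

/-- The Luxemburg norm `‖f‖_{L^p(log L)^α, Q}`
(`∞`, i.e. `⊤`, if no admissible constant exists). -/
def LuxNorm {d : ℕ} (p α : ℝ) (Q : Set (Rd d)) (f : Rd d → ℝ) : ℝ≥0∞ :=
  sInf {c : ℝ≥0∞ | ∃ t : ℝ, 0 < t ∧ c = ENNReal.ofReal t ∧
    ∫⁻ x in Q,
      ENNReal.ofReal ((|f x| / t) ^ p * (Real.log (Real.exp 1 + |f x| / t)) ^ α) ≤ volume Q}

/-- convolution `K * g`. -/
def convK {d : ℕ} (K g : Rd d → ℝ) (x : Rd d) : ℝ := ∫ y, K (x - y) * g y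

lemma cube_vol {d : ℕ} {Q : Set (Rd d)} (hQ : IsCube Q) :
    volume Q ≠ 0 ∧ volume Q ≠ ⊤ := by
  obtain ⟨l, hl, c, rfl⟩ := hQ
  have hQeq : {x : Rd d | ∀ i, x i ∈ Icc (c i) (c i + l)}
      = (MeasurableEquiv.toLp 2 (Fin d → ℝ)).symm ⁻¹'
        (Set.univ.pi fun i => Icc (c i) (c i + l)) := by
    ext x
    simp [Set.mem_pi, Pi.le_def, forall_and]
  rw [hQeq, (EuclideanSpace.volume_preserving_symm_measurableEquiv_toLp (Fin d)).measure_preimage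
    (MeasurableSet.univ_pi fun i => measurableSet_Icc).nullMeasurableSet]
  rw [volume_pi_pi]
  simp only [Real.volume_Icc, add_sub_cancel_left]
  constructor
  · simp only [Finset.prod_const, Finset.card_univ, Fintype.card_fin]
    exact pow_ne_zero _ (by simp [hl])
  · exact (ENNReal.prod_lt_top (fun i _ => ENNReal.ofReal_lt_top)).ne

lemma aux_pt {p p' α t v : ℝ} (hp'1 : 1 < p') (hp'p : p' < p) (hα : 0 ≤ α)
    (ht0 : 0 < t) (ht2 : t ≤ 2) (hv : 0 ≤ v) :
    v ^ p' ≤ 2 ^ p' * v +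
      2 ^ p' * (((Real.exp 1 + 1) ^ ((p - p') / (α + 1)) / ((p - p') / (α + 1))) ^ α) *
        ((v / t) ^ p * Real.log (Real.exp 1 + v / t) ^ (-α)) := by
  set δ := (p - p') / (α + 1) with hδ_def
  have hδ0 : 0 < δ := by apply div_pos <;> linarith
  set A := ((Real.exp 1 + 1) ^ δ / δ) ^ α with hA_def
  set u := v / t with hu_def
  have hu0 : 0 ≤ u := div_nonneg hv ht0.le
  have hlog1 : 1 ≤ Real.log (Real.exp 1 + u) := by
    calc (1:ℝ) = Real.log (Real.exp 1) := (Real.log_exp 1).symm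
    _ ≤ _ := Real.log_le_log (Real.exp_pos 1) (by linarith)
  have hlog0 : 0 ≤ Real.log (Real.exp 1 + u) := by linarith
  have hA0 : 0 < A := by
    apply Real.rpow_pos_of_pos
    positivity
  by_cases hvt : v ≤ t
  · have hv2 : v ≤ 2 := hvt.trans ht2
    have key : v ^ p' ≤ 2 ^ p' * v := by
      rcases eq_or_lt_of_le hv with h0 | h0
      · rw [← h0, Real.zero_rpow (by linarith : p' ≠ 0)]
        positivity
      · calc v ^ p' = v ^ (p' - 1) * v := by
              rw [show p' = p' - 1 + 1 by ring, Real.rpow_add h0, Real.rpow_one]; ring_nf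
        _ ≤ 2 ^ (p' - 1) * v :=
              mul_le_mul_of_nonneg_right (Real.rpow_le_rpow hv hv2 (by linarith)) hv
        _ ≤ 2 ^ p' * v :=
              mul_le_mul_of_nonneg_right
                (Real.rpow_le_rpow_of_exponent_le one_le_two (by linarith)) hv
    have h2 : 0 ≤ 2 ^ p' * A * (u ^ p * Real.log (Real.exp 1 + u) ^ (-α)) := by positivity
    linarith
  · push_neg at hvt
    have hu1 : 1 < u := (one_lt_div ht0).mpr hvt
    have hu0' : 0 < u := by linarith
    have hlogA : Real.log (Real.exp 1 + u) ^ α ≤ A * u ^ (p - p') := by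
      have l1 : Real.log (Real.exp 1 + u) ≤ ((Real.exp 1 + 1) ^ δ / δ) * u ^ δ := by
        calc Real.log (Real.exp 1 + u) ≤ (Real.exp 1 + u) ^ δ / δ :=
              Real.log_le_rpow_div (by positivity) hδ0
        _ ≤ ((Real.exp 1 + 1) * u) ^ δ / δ := by
              apply (div_le_div_iff_of_pos_right hδ0).mpr
              exact Real.rpow_le_rpow (by positivity)
                (by nlinarith [mul_nonneg (Real.exp_pos 1).le (by linarith : (0:ℝ) ≤ u - 1)])
                hδ0.le
        _ = (Real.exp 1 + 1) ^ δ * u ^ δ / δ := by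
              rw [Real.mul_rpow (by positivity) hu0]
        _ = ((Real.exp 1 + 1) ^ δ / δ) * u ^ δ := by ring
      calc Real.log (Real.exp 1 + u) ^ α ≤ (((Real.exp 1 + 1) ^ δ / δ) * u ^ δ) ^ α :=
            Real.rpow_le_rpow hlog0 l1 hα
      _ = A * (u ^ δ) ^ α := by rw [Real.mul_rpow (by positivity) (by positivity)]
      _ = A * u ^ (δ * α) := by rw [← Real.rpow_mul hu0]
      _ ≤ A * u ^ (p - p') := by
            apply mul_le_mul_of_nonneg_left ?_ hA0.le
            apply Real.rpow_le_rpow_of_exponent_le hu1.le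
            rw [hδ_def, div_mul_eq_mul_div, div_le_iff₀ (by linarith : (0:ℝ) < α + 1)]
            nlinarith
    have hupp' : u ^ p' * Real.log (Real.exp 1 + u) ^ α ≤ A * u ^ p := by
      calc u ^ p' * Real.log (Real.exp 1 + u) ^ α ≤ u ^ p' * (A * u ^ (p - p')) :=
            mul_le_mul_of_nonneg_left hlogA (Real.rpow_nonneg hu0 _)
      _ = A * (u ^ p' * u ^ (p - p')) := by ring
      _ = A * u ^ p := by rw [← Real.rpow_add hu0']; ring_nf
    have hL : 0 < Real.log (Real.exp 1 + u) ^ α := Real.rpow_pos_of_pos (by linarith) α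
    have hut : u ^ p' ≤ A * (u ^ p * Real.log (Real.exp 1 + u) ^ (-α)) := by
      rw [Real.rpow_neg hlog0,
        show A * (u ^ p * (Real.log (Real.exp 1 + u) ^ α)⁻¹)
          = A * u ^ p / Real.log (Real.exp 1 + u) ^ α by ring,
        le_div_iff₀ hL]
      exact hupp'
    have hv2u : v ≤ 2 * u := by
      have h := div_mul_cancel₀ v ht0.ne'
      nlinarith [h, hu0']
    calc v ^ p' ≤ (2 * u) ^ p' := Real.rpow_le_rpow hv hv2u (by linarith)
    _ = 2 ^ p' * u ^ p' := Real.mul_rpow (by norm_num) hu0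
    _ ≤ 2 ^ p' * (A * (u ^ p * Real.log (Real.exp 1 + u) ^ (-α))) :=
          mul_le_mul_of_nonneg_left hut (by positivity)
    _ = 2 ^ p' * A * (u ^ p * Real.log (Real.exp 1 + u) ^ (-α)) := by ring
    _ ≤ _ := le_add_of_nonneg_left (by positivity)


set_option maxHeartbeats 1000000 in
/-- Lemma 2.1. If `(1/|Q|)∫_Q |f| ≤ C₁ ≤ 1` and
`‖f‖_{L^p(log L)^{-α},Q} ≤ 1`, then for `q ∈ (1,p)`, `1/q = r + (1-r)/p` and
`ε ∈ (0,r)` one has `((1/|Q|)∫_Q |f|^q)^{1/q} ≤ C · C₁^ε`, with `C = C(p,q,α,ε)`. -/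
theorem statement2 (p q α ε r : ℝ) (hp : 1 < p) (hq : 1 < q) (hqp : q < p)
    (hα : 0 ≤ α) (hr0 : 0 < r) (hr1 : r < 1) (hr : 1 / q = r + (1 - r) / p)
    (hε0 : 0 < ε) (hεr : ε < r) :
    ∃ C : ℝ, 0 < C ∧
      ∀ (d : ℕ) (Q : Set (Rd d)) (f : Rd d → ℝ) (C₁ : ℝ),
        IsCube Q → Measurable f → 0 < C₁ → C₁ ≤ 1 →
        (volume Q)⁻¹ * (∫⁻ x in Q, ENNReal.ofReal |f x|) ≤ ENNReal.ofReal C₁ →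
        LuxNorm p (-α) Q f ≤ 1 →
        ((volume Q)⁻¹ * ∫⁻ x in Q, ENNReal.ofReal (|f x| ^ q)) ^ (1 / q) ≤
          ENNReal.ofReal (C * C₁ ^ ε) := by
  have hq0 : (0:ℝ) < q := by linarith
  have hp0 : (0:ℝ) < p := by linarith
  have h1r : (0:ℝ) < 1 - r := by linarith
  have hr1q : r < 1 / q := by
    have hpos : 0 < (1 - r) / p := by positivity
    rw [hr]; linarith
  have hrq : r * q < 1 := (lt_div_iff₀ hq0).mp hr1q
  set s : ℝ := (ε + r) / 2 with hs_def
  have hεs : ε < s := by rw [hs_def]; linarith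
  have hsr : s < r := by rw [hs_def]; linarith
  have hs0 : 0 < s := by linarith
  have hs1 : s < 1 := by linarith
  have hsq : s * q < 1 := by nlinarith
  have h1sq : 0 < 1 - s * q := by linarith
  have hqs1 : q * s < 1 := by rwa [mul_comm]
  have hqs0 : 0 < q * s := mul_pos hq0 hs0
  set p' : ℝ := q * (1 - s) / (1 - s * q) with hp'_def
  have hp'q : q < p' := by
    rw [hp'_def, lt_div_iff₀ h1sq]
    nlinarith
  have hp'1 : 1 < p' := lt_trans hq hp'q
  have hp'0 : 0 < p' := by linarith
  have hpeq : p * (1 - r * q) = q * (1 - r) := by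
    field_simp at hr
    nlinarith [hr]
  have hrq0 : 0 < 1 - r * q := by linarith
  have hp'p : p' < p := by
    rw [hp'_def, div_lt_iff₀ h1sq]
    have key2 : p * (1 - s * q) * (1 - r * q) = q * (1 - r) * (1 - s * q) := by
      linear_combination (1 - s * q) * hpeq
    have key3 : q * (1 - s) * (1 - r * q) < q * (1 - r) * (1 - s * q) := by
      nlinarith [mul_pos (mul_pos hq0 (by linarith : (0:ℝ) < q - 1))
        (by linarith : (0:ℝ) < r - s)]
    have key4 : q * (1 - s) * (1 - r * q) < p * (1 - s * q) * (1 - r * q) := by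
      rw [key2]; exact key3
    exact lt_of_mul_lt_mul_right key4 hrq0.le
  have hδ0 : 0 < (p - p') / (α + 1) := div_pos (by linarith) (by linarith)
  set A : ℝ := ((Real.exp 1 + 1) ^ ((p - p') / (α + 1)) / ((p - p') / (α + 1))) ^ α
    with hA_def
  have hA0 : 0 < A :=
    Real.rpow_pos_of_pos (div_pos (Real.rpow_pos_of_pos (by positivity) _) hδ0) α
  set K : ℝ := 2 ^ p' * (1 + A) with hK_def
  have hK0 : 0 < K := mul_pos (Real.rpow_pos_of_pos two_pos p') (by linarith)
  have hconj : (1 / (q * s)).HolderConjugate (1 / (1 - q * s)) := by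
    rw [Real.holderConjugate_iff]
    constructor
    · rw [lt_div_iff₀ hqs0, one_mul]; exact hqs1
    · simp only [one_div, inv_inv]; ring
  have hexp' : q * (1 - s) * (1 / (1 - q * s)) = p' := by
    rw [hp'_def, mul_one_div, mul_comm s q]
  refine ⟨K ^ ((1 - q * s) / q), Real.rpow_pos_of_pos hK0 _, ?_⟩
  intro d Q f C₁ hQ hf hC₁0 hC₁1 havg hlux
  obtain ⟨hQ0, hQt⟩ := cube_vol hQ
  -- extract t from the Luxemburg norm hypothesis
  have hlt : LuxNorm p (-α) Q f < 2 := lt_of_le_of_lt hlux ENNReal.one_lt_two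
  rw [LuxNorm, sInf_lt_iff] at hlt
  obtain ⟨c, ⟨t, ht0, rfl, hint⟩, hc2⟩ := hlt
  have ht2 : t ≤ 2 := by
    by_contra hcon
    push_neg at hcon
    have h2 : (2:ℝ≥0∞) ≤ ENNReal.ofReal t := by
      rw [← ENNReal.ofReal_ofNat 2]
      exact ENNReal.ofReal_le_ofReal hcon.le
    exact absurd hc2 (not_lt.mpr h2)
  set g : Rd d → ℝ≥0∞ := fun x => ENNReal.ofReal |f x| with hg_def
  have hgm : Measurable g := hf.abs.ennreal_ofReal
  have hI1 : (∫⁻ x in Q, g x) ≤ ENNReal.ofReal C₁ * volume Q := by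
    calc (∫⁻ x in Q, g x) = (volume Q * (volume Q)⁻¹) * ∫⁻ x in Q, g x := by
          rw [ENNReal.mul_inv_cancel hQ0 hQt, one_mul]
    _ = volume Q * ((volume Q)⁻¹ * ∫⁻ x in Q, g x) := by rw [mul_assoc]
    _ ≤ volume Q * ENNReal.ofReal C₁ := mul_le_mul' le_rfl havg
    _ = ENNReal.ofReal C₁ * volume Q := mul_comm _ _
  set h : Rd d → ℝ≥0∞ := fun x =>
    ENNReal.ofReal ((|f x| / t) ^ p * Real.log (Real.exp 1 + |f x| / t) ^ (-α)) with hh_def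
  have hhm : Measurable h := by
    apply Measurable.ennreal_ofReal
    exact ((hf.abs.div_const t).pow_const p).mul
      (((measurable_const.add (hf.abs.div_const t)).log).pow_const (-α))
  have hptw : ∀ x, g x ^ p' ≤
      ENNReal.ofReal (2 ^ p') * g x + ENNReal.ofReal (2 ^ p' * A) * h x := by
    intro x
    have h1 : g x ^ p' = ENNReal.ofReal (|f x| ^ p') :=
      ENNReal.ofReal_rpow_of_nonneg (abs_nonneg _) hp'0.le
    rw [h1]
    calc ENNReal.ofReal (|f x| ^ p')
        ≤ ENNReal.ofReal (2 ^ p' * |f x| +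
            2 ^ p' * A * ((|f x| / t) ^ p * Real.log (Real.exp 1 + |f x| / t) ^ (-α))) := by
          apply ENNReal.ofReal_le_ofReal
          rw [hA_def]
          exact aux_pt hp'1 hp'p hα ht0 ht2 (abs_nonneg _)
    _ = _ := by
          rw [ENNReal.ofReal_add (by positivity)
              (mul_nonneg (mul_nonneg (by positivity) hA0.le)
                (mul_nonneg (Real.rpow_nonneg (by positivity) p)
                  (Real.rpow_nonneg (Real.log_nonneg (by
                    linarith [Real.add_one_le_exp 1,
                      div_nonneg (abs_nonneg (f x)) ht0.le])) _))),
            ENNReal.ofReal_mul (by positivity : (0:ℝ) ≤ 2 ^ p'),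
            ENNReal.ofReal_mul (mul_nonneg (by positivity) hA0.le)]
  have hIp' : (∫⁻ x in Q, g x ^ p') ≤ ENNReal.ofReal K * volume Q := by
    calc (∫⁻ x in Q, g x ^ p')
        ≤ ∫⁻ x in Q, (ENNReal.ofReal (2 ^ p') * g x + ENNReal.ofReal (2 ^ p' * A) * h x) :=
          lintegral_mono hptw
    _ = ENNReal.ofReal (2 ^ p') * (∫⁻ x in Q, g x)
          + ENNReal.ofReal (2 ^ p' * A) * ∫⁻ x in Q, h x := by
          rw [lintegral_add_left (hgm.const_mul _),
            lintegral_const_mul' _ _ ENNReal.ofReal_ne_top,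
            lintegral_const_mul' _ _ ENNReal.ofReal_ne_top]
    _ ≤ ENNReal.ofReal (2 ^ p') * (ENNReal.ofReal C₁ * volume Q)
          + ENNReal.ofReal (2 ^ p' * A) * volume Q := by
          gcongr
    _ ≤ ENNReal.ofReal (2 ^ p') * (1 * volume Q) + ENNReal.ofReal (2 ^ p' * A) * volume Q := by
          gcongr
          exact ENNReal.ofReal_le_one.mpr hC₁1
    _ = (ENNReal.ofReal (2 ^ p') + ENNReal.ofReal (2 ^ p' * A)) * volume Q := by
          rw [one_mul]; ring
    _ = ENNReal.ofReal K * volume Q := by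
          rw [← ENNReal.ofReal_add (by positivity) (mul_nonneg (by positivity) hA0.le), hK_def]
          congr 1
          ring
  have hFm : AEMeasurable (fun x => g x ^ (q * s)) (volume.restrict Q) :=
    (hgm.pow_const _).aemeasurable
  have hGm : AEMeasurable (fun x => g x ^ (q * (1 - s))) (volume.restrict Q) :=
    (hgm.pow_const _).aemeasurable
  have hHold2 : (∫⁻ x in Q, g x ^ q) ≤
      (∫⁻ x in Q, g x) ^ (q * s) * (∫⁻ x in Q, g x ^ p') ^ (1 - q * s) := by
    have hH := ENNReal.lintegral_mul_le_Lp_mul_Lq (volume.restrict Q) hconj hFm hGm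
    rw [one_div_one_div, one_div_one_div] at hH
    calc (∫⁻ x in Q, g x ^ q) = ∫⁻ x in Q, g x ^ (q * s) * g x ^ (q * (1 - s)) := by
          apply lintegral_congr
          intro x
          rw [← ENNReal.rpow_add_of_nonneg _ _ (mul_nonneg hq0.le hs0.le)
              (mul_nonneg hq0.le (by linarith : (0:ℝ) ≤ 1 - s))]
          congr 1
          ring
    _ ≤ (∫⁻ x in Q, (g x ^ (q * s)) ^ (1 / (q * s))) ^ (q * s)
          * (∫⁻ x in Q, (g x ^ (q * (1 - s))) ^ (1 / (1 - q * s))) ^ (1 - q * s) := hH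
    _ = _ := by
          congr 1
          · congr 1
            apply lintegral_congr
            intro x
            rw [← ENNReal.rpow_mul, mul_one_div_cancel hqs0.ne', ENNReal.rpow_one]
          · congr 1
            apply lintegral_congr
            intro x
            rw [← ENNReal.rpow_mul, hexp']
  have hnq : (0:ℝ) ≤ 1 - q * s := by linarith
  have hstep : (volume Q)⁻¹ * ∫⁻ x in Q, g x ^ q ≤
      ENNReal.ofReal C₁ ^ (q * s) * ENNReal.ofReal K ^ (1 - q * s) := by
    have hb : (∫⁻ x in Q, g x) ^ (q * s) * (∫⁻ x in Q, g x ^ p') ^ (1 - q * s)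
        ≤ (ENNReal.ofReal C₁ * volume Q) ^ (q * s)
          * (ENNReal.ofReal K * volume Q) ^ (1 - q * s) :=
      mul_le_mul' (ENNReal.rpow_le_rpow hI1 hqs0.le) (ENNReal.rpow_le_rpow hIp' hnq)
    calc (volume Q)⁻¹ * ∫⁻ x in Q, g x ^ q
        ≤ (volume Q)⁻¹ * ((ENNReal.ofReal C₁ * volume Q) ^ (q * s)
            * (ENNReal.ofReal K * volume Q) ^ (1 - q * s)) :=
          mul_le_mul' le_rfl (hHold2.trans hb)
    _ = ENNReal.ofReal C₁ ^ (q * s) * ENNReal.ofReal K ^ (1 - q * s)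
          * ((volume Q)⁻¹ * (volume Q ^ (q * s) * volume Q ^ (1 - q * s))) := by
          rw [ENNReal.mul_rpow_of_nonneg _ _ hqs0.le,
            ENNReal.mul_rpow_of_nonneg _ _ hnq]
          ring
    _ = ENNReal.ofReal C₁ ^ (q * s) * ENNReal.ofReal K ^ (1 - q * s) := by
          rw [← ENNReal.rpow_add _ _ hQ0 hQt, show q * s + (1 - q * s) = 1 by ring,
            ENNReal.rpow_one, ENNReal.inv_mul_cancel hQ0 hQt, mul_one]
  have hgq : (∫⁻ x in Q, ENNReal.ofReal (|f x| ^ q)) = ∫⁻ x in Q, g x ^ q :=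
    lintegral_congr fun x => (ENNReal.ofReal_rpow_of_nonneg (abs_nonneg _) hq0.le).symm
  rw [hgq]
  calc ((volume Q)⁻¹ * ∫⁻ x in Q, g x ^ q) ^ (1 / q)
      ≤ (ENNReal.ofReal C₁ ^ (q * s) * ENNReal.ofReal K ^ (1 - q * s)) ^ (1 / q) :=
        ENNReal.rpow_le_rpow hstep (one_div_nonneg.mpr hq0.le)
  _ = ENNReal.ofReal C₁ ^ s * ENNReal.ofReal K ^ ((1 - q * s) / q) := by
        rw [ENNReal.mul_rpow_of_nonneg _ _ (one_div_nonneg.mpr hq0.le),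
          ← ENNReal.rpow_mul, ← ENNReal.rpow_mul,
          show q * s * (1 / q) = s by field_simp,
          show (1 - q * s) * (1 / q) = (1 - q * s) / q by ring]
  _ ≤ ENNReal.ofReal C₁ ^ ε * ENNReal.ofReal K ^ ((1 - q * s) / q) :=
        mul_le_mul_left
          (ENNReal.rpow_le_rpow_of_exponent_ge (ENNReal.ofReal_le_one.mpr hC₁1) hεs.le) _
  _ = ENNReal.ofReal (K ^ ((1 - q * s) / q) * C₁ ^ ε) := by
        rw [ENNReal.ofReal_mul (Real.rpow_nonneg hK0.le _),
          ← ENNReal.ofReal_rpow_of_nonneg hK0.le (div_nonneg hnq hq0.le),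
          ENNReal.ofReal_rpow_of_nonneg hC₁0.le hε0.le, mul_comm]
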